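/- Let G be a strongly connected finite directed graph without loops with sink s. For any vertex x ≠ s, as permutations of Rec(G) one has e_x^{d_x} = ∏_{y} e_y^{d_{xy}}, where d_{xy} is the number of edges from x to y and d_x = Σ_y d_{xy} is the out-degree of x. (Starting with d_x chips at x and letting each take one rotor-router step yields d_{xy} chips at each vertex y with the rotors returned to their original positions.) -/

import Mathlib

/-- A finite directed multigraph without loops, together with a distinguished
sink vertex and, for each vertex `x`, a cyclic ordering of the edges emanating
from `x`: the outgoing edges at `x` are indexed by `ZMod (deg x)` (in cyclic
order), and `head x e` is the target of the edge `e`. -/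
structure RotorGraph (V : Type*) [Fintype V] [DecidableEq V] where
  sink : V
  deg : V → ℕ
  deg_pos : ∀ x, 0 < deg x
  head : ∀ x : V, ZMod (deg x) → V
  no_loops : ∀ x e, head x e ≠ x

namespace RotorGraph

variable {V : Type*} [Fintype V] [DecidableEq V] (G : RotorGraph V)

/-- `x` is adjacent to `y` if some edge goes from `x` to `y`. -/
def Adj (x y : V) : Prop := ∃ e, G.head x e = y

/-- `G` is strongly connected: every vertex has a directed path to every vertex. -/
def StronglyConnected : Prop := ∀ x y : V, Relation.ReflTransGen G.Adj x y

/-- A rotor configuration: each vertex carries a rotor pointing along one of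
its outgoing edges.  (The value at the sink is irrelevant: it is never read
nor modified by the rotor-router walk.) -/
abbrev Conf := ∀ x : V, ZMod (G.deg x)

/-- One step of rotor-router walk for the state (rotor configuration, chip
location): if the chip is not at the sink, first increment the rotor at the
chip's location to the next edge in the cyclic ordering, then move the chip
along this new edge.  States whose chip is at the sink are absorbing. -/
def step (p : G.Conf × V) : G.Conf × V :=
  if p.2 = G.sink then p
  else (Function.update p.1 p.2 (p.1 p.2 + 1), G.head p.2 (p.1 p.2 + 1))

/-- The target of the rotor at `x`. -/
def next (T : G.Conf) (x : V) : V := G.head x (T x)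

/-- The rotors of `T` contain an oriented cycle all of whose vertices lie in `A`. -/
def HasCycleIn (T : G.Conf) (A : Set V) : Prop :=
  ∃ (m : ℕ) (x : V), 0 < m ∧ (∀ i < m, (G.next T)^[i] x ∈ A) ∧ (G.next T)^[m] x = x

/-- `T ∈ Rec(G)`: the rotors at the non-sink vertices form no oriented cycle,
i.e. they form an oriented spanning tree rooted at the sink. -/
def Rec (T : G.Conf) : Prop := ¬ G.HasCycleIn T {y | y ≠ G.sink}

/-- `e_x(T)`: start a chip at `x` and let it perform rotor-router walk until
it first reaches the sink; `chip x T` is the resulting rotor configuration. -/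
noncomputable def chip (x : V) (T : G.Conf) : G.Conf :=
  haveI := Classical.dec (∃ n, (G.step^[n] (T, x)).2 = G.sink)
  if h : ∃ n, (G.step^[n] (T, x)).2 = G.sink then (G.step^[Nat.find h] (T, x)).1 else T

/-- `d_{xy}`: the number of edges from `x` to `y`. -/
def edgeCount (x y : V) : ℕ :=
  haveI : NeZero (G.deg x) := ⟨(G.deg_pos x).ne'⟩
  (Finset.univ.filter fun e : ZMod (G.deg x) => G.head x e = y).card

end RotorGraph

/-!
Put `d_x` chips at `x`. Routing them one at a time to the sink yields `e_x^{d_x}`. Alternatively,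
first fire `x` exactly `d_x` times: its rotor makes one full turn, so it returns to its initial
position and sends `d_{xy}` chips to each `y`; routing these one at a time yields
`∏_y e_y^{d_{xy}}`. Both are legal firing sequences of the multi-chip rotor-router ending with
every chip in the sink, and by the abelian property all such sequences end in the same state.

Strong connectivity makes every single-chip walk reach the sink: a vertex visited infinitely often
has its rotor turn infinitely often, so each of its out-neighbours is visited infinitely often.
-/

theorem List.foldl_replicate {α β : Type*} (f : α → β → α) (a : α) (b : β) (n : ℕ) :
    (List.replicate n b).foldl f a = (fun a => f a b)^[n] a := by
  induction n generalizing a with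
  | zero => rfl
  | succ n ih => rw [List.replicate_succ, List.foldl_cons, ih, Function.iterate_succ_apply]

theorem List.exists_eq_append_cons_notMem {α : Type*} [DecidableEq α] {a : α} :
    ∀ {l : List α}, a ∈ l → ∃ p q, l = p ++ a :: q ∧ a ∉ p
  | b :: l, h => by
    by_cases hab : a = b
    · exact ⟨[], l, by rw [hab]; rfl, List.not_mem_nil⟩
    · obtain ⟨p, q, rfl, hp⟩ :=
        List.exists_eq_append_cons_notMem ((List.mem_cons.1 h).resolve_left hab)
      exact ⟨b :: p, q, rfl, by simp [hab, hp]⟩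

namespace RotorGraph

variable {V : Type*} [Fintype V] [DecidableEq V] {G : RotorGraph V}

section Walk

variable {T : G.Conf} {y : V}

lemma step_of_ne_sink {p : G.Conf × V} (h : p.2 ≠ G.sink) :
    G.step p = (Function.update p.1 p.2 (p.1 p.2 + 1), G.head p.2 (p.1 p.2 + 1)) :=
  if_neg h

lemma step_iterate_of_snd_eq_sink {p : G.Conf × V} (h : p.2 = G.sink) (n : ℕ) :
    G.step^[n] p = p :=
  Function.iterate_fixed (show G.step p = p from if_pos h) n

lemma step_iterate_fst_apply (hne : ∀ n, (G.step^[n] (T, y)).2 ≠ G.sink) (n : ℕ) (v : V) :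
    (G.step^[n] (T, y)).1 v = T v + Nat.count (fun k => (G.step^[k] (T, y)).2 = v) n := by
  induction n with
  | zero => simp
  | succ n ih =>
    rw [Function.iterate_succ_apply', step_of_ne_sink (hne n), Nat.count_succ]
    dsimp only
    by_cases hv : v = (G.step^[n] (T, y)).2
    · rw [hv, Function.update_self, ← hv, ih, if_pos rfl]
      push_cast
      ring
    · rw [Function.update_of_ne hv, ih, if_neg (Ne.symm hv), add_zero]

lemma infinite_visits_head (hne : ∀ n, (G.step^[n] (T, y)).2 ≠ G.sink) {v : V}
    (hv : {k | (G.step^[k] (T, y)).2 = v}.Infinite) (e : ZMod (G.deg v)) :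
    {k | (G.step^[k] (T, y)).2 = G.head v e}.Infinite := by
  refine Set.infinite_of_forall_exists_gt fun N => ?_
  -- the chip leaves `v` along `e` at its `j`-th visit whenever `T v + j + 1 = e`
  set j := G.deg v * N + (e - T v - 1).val
  set k := Nat.nth (fun k => (G.step^[k] (T, y)).2 = v) j
  have hk : (G.step^[k] (T, y)).2 = v := Nat.nth_mem_of_infinite hv j
  have hcount : Nat.count (fun k => (G.step^[k] (T, y)).2 = v) k = j :=
    Nat.count_nth_of_infinite hv j
  have hN : N ≤ k := calc
    N ≤ j := (Nat.le_mul_of_pos_left N (G.deg_pos v)).trans (Nat.le_add_right _ _)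
    _ = _ := hcount.symm
    _ ≤ k := Nat.count_le _
  have : NeZero (G.deg v) := ⟨(G.deg_pos v).ne'⟩
  have hrotor : T v + (j : ZMod (G.deg v)) + 1 = e := by
    simp only [j, Nat.cast_add, Nat.cast_mul, ZMod.natCast_self, zero_mul, zero_add,
      ZMod.natCast_zmod_val]
    ring
  refine ⟨k + 1, ?_, Nat.lt_succ_of_le hN⟩
  show (G.step^[k + 1] (T, y)).2 = G.head v e
  rw [Function.iterate_succ_apply', step_of_ne_sink (hne k), step_iterate_fst_apply hne, hk, hcount,
    hrotor]

theorem exists_step_iterate_snd_eq_sink (hG : G.StronglyConnected) (T : G.Conf) (y : V) :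
    ∃ n, (G.step^[n] (T, y)).2 = G.sink := by
  by_contra! hne
  obtain ⟨v, hv⟩ := Finite.exists_infinite_fiber fun n => (G.step^[n] (T, y)).2
  have hreach : ∀ w, Relation.ReflTransGen G.Adj v w →
      {k | (G.step^[k] (T, y)).2 = w}.Infinite := by
    intro w hw
    induction hw with
    | refl => exact Set.infinite_coe_iff.1 hv
    | tail _ hadj ih =>
      obtain ⟨e, rfl⟩ := hadj
      exact infinite_visits_head hne ih e
  obtain ⟨n, hn⟩ := (hreach G.sink (hG v G.sink)).nonempty
  exact hne n hn

lemma chip_eq_of_step_iterate_snd_eq_sink {N : ℕ} (hN : (G.step^[N] (T, y)).2 = G.sink) :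
    G.chip y T = (G.step^[N] (T, y)).1 := by
  have h : ∃ n, (G.step^[n] (T, y)).2 = G.sink := ⟨N, hN⟩
  obtain ⟨k, rfl⟩ := Nat.exists_eq_add_of_le' (Nat.find_min' h hN)
  rw [chip, dif_pos h, Function.iterate_add_apply, step_iterate_of_snd_eq_sink (Nat.find_spec h)]

end Walk

section Firing

variable (G)

/-- Rotors together with a number of chips at each vertex; counts are integers so that firing
is plain arithmetic, and legality of firing sequences keeps them from going negative. -/
abbrev State := G.Conf × (V → ℤ)

def fire (s : G.State) (v : V) : G.State :=
  (Function.update s.1 v (s.1 v + 1), s.2 - Pi.single v 1 + Pi.single (G.head v (s.1 v + 1)) 1)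

def fireList (s : G.State) (l : List V) : G.State := l.foldl G.fire s

def Legal : G.State → List V → Prop
  | _, [] => True
  | s, v :: l => v ≠ G.sink ∧ 1 ≤ s.2 v ∧ Legal (G.fire s v) l

def Stable (s : G.State) : Prop := ∀ u ≠ G.sink, s.2 u ≤ 0

variable {G}

@[simp] lemma fireList_nil (s : G.State) : G.fireList s [] = s := rfl

lemma fireList_cons (s : G.State) (v : V) (l : List V) :
    G.fireList s (v :: l) = G.fireList (G.fire s v) l := rfl

lemma fireList_append (s : G.State) (a b : List V) :
    G.fireList s (a ++ b) = G.fireList (G.fireList s a) b :=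
  List.foldl_append ..

lemma legal_cons {s : G.State} {v : V} {l : List V} :
    G.Legal s (v :: l) ↔ v ≠ G.sink ∧ 1 ≤ s.2 v ∧ G.Legal (G.fire s v) l := Iff.rfl

lemma legal_append {s : G.State} {a b : List V} :
    G.Legal s (a ++ b) ↔ G.Legal s a ∧ G.Legal (G.fireList s a) b := by
  induction a generalizing s with
  | nil => simp [Legal]
  | cons w l ih => simp only [List.cons_append, legal_cons, fireList_cons, ih, and_assoc]

lemma fire_comm (s : G.State) (v w : V) : G.fire (G.fire s v) w = G.fire (G.fire s w) v := by
  rcases eq_or_ne v w with rfl | hvw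
  · rfl
  have hw : (G.fire s v).1 w = s.1 w := Function.update_of_ne hvw.symm _ _
  have hv : (G.fire s w).1 v = s.1 v := Function.update_of_ne hvw _ _
  simp only [fire] at hv hw ⊢
  rw [hv, hw, Function.update_comm hvw]
  congr 1
  abel

lemma fireList_fire (s : G.State) (v : V) (l : List V) :
    G.fireList (G.fire s v) l = G.fire (G.fireList s l) v := by
  induction l generalizing s with
  | nil => rfl
  | cons w l ih => rw [fireList_cons, fire_comm, ih, fireList_cons]

lemma fire_snd_self (s : G.State) (v : V) : (G.fire s v).2 v = s.2 v - 1 := by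
  simp [fire, (G.no_loops v _).symm]

lemma le_fire_snd (s : G.State) {u v : V} (huv : u ≠ v) : s.2 u ≤ (G.fire s v).2 u := by
  simp only [fire, Pi.add_apply, Pi.sub_apply, Pi.single_apply, if_neg huv]
  split_ifs <;> omega

lemma le_fireList_snd (s : G.State) {u : V} {l : List V} (hu : u ∉ l) :
    s.2 u ≤ (G.fireList s l).2 u := by
  induction l generalizing s with
  | nil => exact le_rfl
  | cons w l ih =>
    rw [List.mem_cons, not_or] at hu
    exact (le_fire_snd s hu.1).trans (ih _ hu.2)

lemma Legal.fire {s : G.State} {l : List V} {v : V} (hl : G.Legal s l) (hv : v ∉ l) :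
    G.Legal (G.fire s v) l := by
  induction l generalizing s with
  | nil => trivial
  | cons w l ih =>
    rw [List.mem_cons, not_or] at hv
    obtain ⟨hw, hchip, hl⟩ := hl
    refine ⟨hw, hchip.trans (le_fire_snd s (Ne.symm hv.1)), ?_⟩
    rw [fire_comm]
    exact ih hl hv.2

lemma Legal.fire_of_append_cons {s : G.State} {p q : List V} {v : V}
    (hl : G.Legal s (p ++ v :: q)) (hv : v ∉ p) : G.Legal (G.fire s v) (p ++ q) := by
  rw [legal_append, legal_cons] at hl
  obtain ⟨hp, -, -, hq⟩ := hl
  rw [legal_append, fireList_fire]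
  exact ⟨hp.fire hv, hq⟩

/-- The abelian property of the rotor-router model. -/
theorem fireList_eq_of_legal_of_stable {s : G.State} {a b : List V}
    (ha : G.Legal s a) (has : G.Stable (G.fireList s a))
    (hb : G.Legal s b) (hbs : G.Stable (G.fireList s b)) :
    G.fireList s a = G.fireList s b := by
  induction b generalizing s a with
  | nil =>
    cases a with
    | nil => rfl
    | cons v l =>
      have hstable : s.2 v ≤ 0 := hbs v ha.1
      exact absurd ha.2.1 (by omega)
  | cons v b ih =>
    obtain ⟨hv, hchip, hb⟩ := hb
    have hva : v ∈ a := by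
      by_contra hva
      exact absurd (has v hv) (by have := le_fireList_snd s hva; omega)
    obtain ⟨p, q, rfl, hp⟩ := List.exists_eq_append_cons_notMem hva
    have hmove : G.fireList s (p ++ v :: q) = G.fireList (G.fire s v) (p ++ q) := by
      rw [fireList_append, fireList_cons, ← fireList_fire, ← fireList_append]
    rw [hmove] at has ⊢
    exact ih (ha.fire_of_append_cons hp) has hb hbs

end Firing

lemma exists_legal_fireList_eq_step_iterate_fst {T : G.Conf} {y : V} {χ : V → ℤ}
    (hχ : 0 ≤ χ) {N : ℕ} (hN : (G.step^[N] (T, y)).2 = G.sink) :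
    ∃ α, G.Legal (T, χ + Pi.single y 1) α ∧
      G.fireList (T, χ + Pi.single y 1) α = ((G.step^[N] (T, y)).1, χ + Pi.single G.sink 1) := by
  induction N generalizing T y with
  | zero => exact ⟨[], trivial, by simp_all⟩
  | succ N ih =>
    by_cases hy : y = G.sink
    · refine ⟨[], trivial, ?_⟩
      rw [step_iterate_of_snd_eq_sink hy, hy]
      rfl
    rw [Function.iterate_succ_apply, step_of_ne_sink hy] at hN ⊢
    obtain ⟨α, hα, hαeq⟩ := ih hN
    have hfire : G.fire (T, χ + Pi.single y 1) y =
        (Function.update T y (T y + 1), χ + Pi.single (G.head y (T y + 1)) 1) := by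
      simp [fire]
    refine ⟨y :: α, ⟨hy, by simpa using hχ y, hfire ▸ hα⟩, ?_⟩
    rw [fireList_cons, hfire, hαeq]

lemma exists_legal_fireList_eq_foldl_chip (hG : G.StronglyConnected) (L : List V) (T : G.Conf)
    {χ : V → ℤ} (hχ : 0 ≤ χ) :
    ∃ α, G.Legal (T, χ + fun u => (L.count u : ℤ)) α ∧
      G.fireList (T, χ + fun u => (L.count u : ℤ)) α =
        (L.foldl (fun S y => G.chip y S) T, χ + L.length • Pi.single G.sink 1) := by
  induction L generalizing T χ with
  | nil => exact ⟨[], trivial, by simp; rfl⟩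
  | cons y L ih =>
    have hsplit : (χ + fun u => ((y :: L).count u : ℤ)) =
        (χ + fun u => (L.count u : ℤ)) + Pi.single y 1 := by
      funext u
      by_cases hu : u = y
      · simp [hu, add_assoc]
      · simp [List.count_cons, hu, Ne.symm hu]
    obtain ⟨N, hN⟩ := exists_step_iterate_snd_eq_sink hG T y
    obtain ⟨α, hα, hαeq⟩ := exists_legal_fireList_eq_step_iterate_fst
      (add_nonneg hχ fun u => Int.natCast_nonneg (L.count u)) hN
    rw [← chip_eq_of_step_iterate_snd_eq_sink hN, add_right_comm χ _ (Pi.single G.sink 1)]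
      at hαeq
    obtain ⟨β, hβ, hβeq⟩ := ih (G.chip y T) (χ := χ + Pi.single G.sink 1)
      (add_nonneg hχ (Pi.single_nonneg.2 zero_le_one))
    refine ⟨α ++ β, legal_append.2 ⟨hsplit ▸ hα, hsplit ▸ hαeq ▸ hβ⟩, ?_⟩
    rw [hsplit, fireList_append, hαeq, hβeq, List.foldl_cons, List.length_cons, succ_nsmul',
      add_assoc]

lemma legal_replicate {s : G.State} {x : V} (hx : x ≠ G.sink) {j : ℕ}
    (hj : (j : ℤ) ≤ s.2 x) :
    G.Legal s (List.replicate j x) := by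
  induction j generalizing s with
  | zero => trivial
  | succ j ih =>
    push_cast at hj
    exact ⟨hx, by omega, ih (by rw [fire_snd_self]; omega)⟩

lemma fireList_replicate (s : G.State) (x : V) (j : ℕ) :
    G.fireList s (List.replicate j x) = (Function.update s.1 x (s.1 x + j),
      s.2 - j • Pi.single x 1 +
        ∑ i ∈ Finset.range j, Pi.single (G.head x (s.1 x + i + 1)) 1) := by
  induction j with
  | zero => simp
  | succ j ih =>
    rw [List.replicate_succ', fireList_append, ih, fireList_cons, fireList_nil, fire]
    simp only [Function.update_self, Function.update_idem, Nat.cast_succ, succ_nsmul,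
      Finset.sum_range_succ, add_assoc]
    congr 1
    abel

/-- Each outgoing edge of `x` is used exactly once during a full turn of its rotor. -/
lemma sum_range_single_head_rotor (x : V) (c : ZMod (G.deg x)) :
    ∑ i ∈ Finset.range (G.deg x), Pi.single (G.head x (c + i + 1)) (1 : ℤ) =
      fun u => (G.edgeCount x u : ℤ) := by
  have : NeZero (G.deg x) := ⟨(G.deg_pos x).ne'⟩
  calc _ = ∑ e : ZMod (G.deg x), Pi.single (G.head x e) (1 : ℤ) := by
        refine Finset.sum_nbij' (fun i => c + i + 1) (fun e => (e - c - 1).val) (by simp)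
          (fun e _ => Finset.mem_range.2 (ZMod.val_lt _)) (fun i hi => ?_) (fun e _ => ?_)
          (fun _ _ => rfl)
        · rw [show c + (i : ZMod (G.deg x)) + 1 - c - 1 = i by ring]
          exact ZMod.val_cast_of_lt (Finset.mem_range.1 hi)
        · simp only [ZMod.natCast_zmod_val]
          ring
    _ = _ := by
      funext u
      rw [Finset.sum_apply]
      simp only [Pi.single_apply, Finset.sum_boole, edgeCount, eq_comm]

lemma fireList_replicate_deg (s : G.State) (x : V) :
    G.fireList s (List.replicate (G.deg x) x) =
      (s.1, s.2 - G.deg x • Pi.single x 1 + fun u => (G.edgeCount x u : ℤ)) := by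
  rw [fireList_replicate, sum_range_single_head_rotor, ZMod.natCast_self, add_zero,
    Function.update_eq_self]

lemma stable_nsmul_single_sink (T : G.Conf) (n : ℕ) : G.Stable (T, n • Pi.single G.sink 1) :=
  fun u hu => by simp [hu]

end RotorGraph

/-- The product `∏_y e_y^{d_{xy}}` is applied in the order of a list `L` containing each `y`
with multiplicity `d_{xy}`. -/
theorem stmt5_general {V : Type*} [Fintype V] [DecidableEq V] (G : RotorGraph V)
    (hG : G.StronglyConnected) (x : V) (hx : x ≠ G.sink)
    (T : G.Conf)
    (L : List V) (hL : ∀ y : V, L.count y = G.edgeCount x y) :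
    (fun S => G.chip x S)^[G.deg x] T = L.foldl (fun S y => G.chip y S) T := by
  open RotorGraph in
  have hstart :
      (fun u => ((List.replicate (G.deg x) x).count u : ℤ)) = G.deg x • Pi.single x 1 := by
    funext u
    by_cases hu : u = x
    · simp [hu]
    · simp [List.count_replicate, hu, Ne.symm hu]
  obtain ⟨α, hα, hαeq⟩ :=
    exists_legal_fireList_eq_foldl_chip hG (List.replicate (G.deg x) x) T le_rfl
  obtain ⟨β, hβ, hβeq⟩ := exists_legal_fireList_eq_foldl_chip hG L T le_rfl
  simp only [zero_add, hstart, List.length_replicate] at hα hαeq hβ hβeq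
  have hturn : G.fireList (T, G.deg x • Pi.single x 1) (List.replicate (G.deg x) x) =
      (T, fun u => (L.count u : ℤ)) := by
    simp [fireList_replicate_deg, hL]
  have key := fireList_eq_of_legal_of_stable hα (hαeq ▸ stable_nsmul_single_sink _ _)
    (legal_append.2 ⟨legal_replicate hx (by simp), hturn ▸ hβ⟩)
    (by rw [fireList_append, hturn, hβeq]; exact stable_nsmul_single_sink _ _)
  rw [fireList_append, hturn, hβeq, hαeq, List.foldl_replicate] at key
  exact congrArg Prod.fst key

/-- As permutations of `Rec(G)`, `e_x^{d_x} = ∏_y e_y^{d_{xy}}`: applying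
`e_x` exactly `d_x` times to a configuration `T ∈ Rec(G)` has the same effect
as applying, for every vertex `y`, the operator `e_y` exactly `d_{xy}` times
(in any order, here recorded as a list `L` containing each `y` with
multiplicity `d_{xy}`). -/
theorem stmt5 {V : Type*} [Fintype V] [DecidableEq V] (G : RotorGraph V)
    (hG : G.StronglyConnected) (x : V) (hx : x ≠ G.sink)
    (T : G.Conf) (hT : G.Rec T)
    (L : List V) (hL : ∀ y : V, L.count y = G.edgeCount x y) :
    (fun S => G.chip x S)^[G.deg x] T = L.foldl (fun S y => G.chip y S) T :=
  stmt5_general G hG x hx T L hL
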